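/- arXiv:2009.14358 — 13 statements merged into one kernel-verified Lean document; each statement's English description precedes it below -/
import Mathlib

section
/- Let (X, δ) be an α-stable instance of the k-median clustering problem with α > 1. Then the optimal clustering of (X, δ) is unique: any two partitions of X that arise as the clustering induced by a cost-minimizing center set coincide. -/
/-- `δ` is a metric on `X`. -/
def IsMetric {X : Type*} (δ : X → X → ℝ) : Prop :=
  (∀ p q, 0 ≤ δ p q) ∧ (∀ p, δ p p = 0) ∧ (∀ p q, δ p q = 0 → p = q) ∧
    (∀ p q, δ p q = δ q p) ∧ (∀ p q r, δ p r ≤ δ p q + δ q r)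

/-- The `k`-median cost of a center set `S`: each point contributes its distance
to the nearest center. -/
noncomputable def kmedCost {X : Type*} [Fintype X] (δ : X → X → ℝ) (S : Finset X) : ℝ :=
  ∑ p : X, sInf (δ p '' (S : Set X))

/-- Every point of `X` has a unique nearest center in `S`. -/
def UniqueNearest {X : Type*} (δ : X → X → ℝ) (S : Finset X) : Prop :=
  ∀ p : X, ∃! c, c ∈ S ∧ ∀ c' ∈ S, δ p c ≤ δ p c'

/-- The clustering (partition of `X`) induced by a center set `S`: points are grouped
according to their nearest center in `S`. -/
def clustering {X : Type*} (δ : X → X → ℝ) (S : Finset X) : Set (Set X) :=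
  {Y | ∃ c ∈ S, Y = {p : X | ∀ c' ∈ S, δ p c ≤ δ p c'}}

/-- `P` is an optimal clustering of `(X, δ)`: it is induced by some center set of size `k`
(with unique nearest assignments) minimizing the `k`-median cost. -/
def IsOptimalClustering {X : Type*} [Fintype X] (δ : X → X → ℝ) (k : ℕ)
    (P : Set (Set X)) : Prop :=
  ∃ S : Finset X, S.card = k ∧ UniqueNearest δ S ∧
    (∀ T : Finset X, T.card = k → kmedCost δ S ≤ kmedCost δ T) ∧
    P = clustering δ S

/-- The instance `(X, δ)` is `α`-stable: for every perturbation `δ'` with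
`δ ≤ δ' ≤ α·δ` pointwise, every optimal clustering of `(X, δ)` is also an
optimal clustering of `(X, δ')`. -/
def IsStable {X : Type*} [Fintype X] (δ : X → X → ℝ) (k : ℕ) (α : ℝ) : Prop :=
  ∀ δ' : X → X → ℝ, (∀ p q, δ p q ≤ δ' p q ∧ δ' p q ≤ α * δ p q) →
    ∀ P : Set (Set X), IsOptimalClustering δ k P → IsOptimalClustering δ' k P

/-- If `c ∈ S` is a nearest point to `p` in `S`, then the infimum of distances
from `p` to `S` equals `δ p c`. -/
lemma sInf_image_finset_eq {X : Type*} (d : X → X → ℝ) (S : Finset X) (p c : X)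
    (hc : c ∈ S) (hmin : ∀ c' ∈ S, d p c ≤ d p c') :
    sInf (d p '' (S : Set X)) = d p c := by
  apply le_antisymm
  · exact csInf_le (S.finite_toSet.image _).bddBelow ⟨c, hc, rfl⟩
  · exact le_csInf ⟨_, ⟨c, hc, rfl⟩⟩ (by rintro b ⟨c', hc', rfl⟩; exact hmin c' hc')

/-- If `(X, δ)` is an `α`-stable `k`-median instance with `α > 1`,
then the optimal clustering of `(X, δ)` is unique. -/
theorem uniqueness_of_optimal_clustering {X : Type*} [Fintype X]
    (δ : X → X → ℝ) (hmetric : IsMetric δ) (k : ℕ) (hk1 : 1 ≤ k)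
    (hkn : k ≤ Fintype.card X) (α : ℝ) (hα : 1 < α)
    (hstable : IsStable δ k α)
    (P Q : Set (Set X)) (hP : IsOptimalClustering δ k P)
    (hQ : IsOptimalClustering δ k Q) : P = Q := by
  classical
  obtain ⟨hnn, hrefl, hsep, hsymm, htri⟩ := hmetric
  obtain ⟨S, hScard, hSun, hSmin, hPeq⟩ := hP
  -- the nearest-center map for `S`
  choose f hf using hSun
  have hf1 : ∀ p, f p ∈ S := fun p => (hf p).1.1
  have hf2 : ∀ p, ∀ c' ∈ S, δ p (f p) ≤ δ p c' := fun p => (hf p).1.2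
  have hfu : ∀ p c, c ∈ S → (∀ c' ∈ S, δ p c ≤ δ p c') → c = f p :=
    fun p c h1 h2 => (hf p).2 c ⟨h1, h2⟩
  have hfid : ∀ c ∈ S, f c = c := by
    intro c hc
    exact (hfu c c hc (fun c' hc' => by rw [hrefl]; exact hnn c c')).symm
  -- the perturbation: inter-cluster distances blown up by `α`
  set δ' : X → X → ℝ := fun p q => if f p = f q then δ p q else α * δ p q with hδ'def
  have h1 : ∀ p q, δ p q ≤ δ' p q ∧ δ' p q ≤ α * δ p q := by
    intro p q
    show δ p q ≤ (if f p = f q then δ p q else α * δ p q) ∧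
      (if f p = f q then δ p q else α * δ p q) ≤ α * δ p q
    split_ifs with h
    · exact ⟨le_refl _, le_mul_of_one_le_left (hnn p q) hα.le⟩
    · exact ⟨le_mul_of_one_le_left (hnn p q) hα.le, le_refl _⟩
  have hδ'f : ∀ p, δ' p (f p) = δ p (f p) := by
    intro p
    show (if f p = f (f p) then _ else _) = δ p (f p)
    rw [if_pos (hfid (f p) (hf1 p)).symm]
  have hS' : ∀ p : X, sInf (δ' p '' (S : Set X)) = δ p (f p) := by
    intro p
    have := sInf_image_finset_eq δ' S p (f p) (hf1 p)
      (fun c' hc' => by rw [hδ'f p]; exact (hf2 p c' hc').trans (h1 p c').1)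
    rw [this, hδ'f p]
  have hcostS' : kmedCost δ' S = kmedCost δ S := by
    unfold kmedCost
    refine Finset.sum_congr rfl (fun p _ => ?_)
    rw [hS' p, sInf_image_finset_eq δ S p (f p) (hf1 p) (hf2 p)]
  -- apply stability to `Q`
  obtain ⟨U, hUcard, hUun, hUmin, hQeq⟩ := hstable δ' h1 Q hQ
  have hUne : U.Nonempty := Finset.card_pos.mp (by omega)
  -- the nearest-center map for `U` under `δ'`
  choose g hg using hUun
  have hg1 : ∀ p, g p ∈ U := fun p => (hg p).1.1
  have hg2 : ∀ p, ∀ c' ∈ U, δ' p (g p) ≤ δ' p c' := fun p => (hg p).1.2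
  have hgu : ∀ p c, c ∈ U → (∀ c' ∈ U, δ' p c ≤ δ' p c') → c = g p :=
    fun p c hh1 hh2 => (hg p).2 c ⟨hh1, hh2⟩
  have hδ'nn : ∀ p q, 0 ≤ δ' p q := fun p q => (hnn p q).trans (h1 p q).1
  have hgid : ∀ u ∈ U, g u = u := by
    intro u hu
    refine (hgu u u hu (fun c' hc' => ?_)).symm
    have : δ' u u = 0 := by
      show (if f u = f u then δ u u else _) = 0
      rw [if_pos rfl, hrefl]
    rw [this]; exact hδ'nn u c'
  -- cost sandwich
  have hUS' : kmedCost δ' U ≤ kmedCost δ S := (hUmin S hScard).trans_eq hcostS'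
  have hδU_le : ∀ p : X, sInf (δ p '' (U : Set X)) ≤ sInf (δ' p '' (U : Set X)) := by
    intro p
    refine le_csInf ⟨_, ⟨g p, hg1 p, rfl⟩⟩ ?_
    rintro b ⟨c, hc, rfl⟩
    exact (csInf_le (U.finite_toSet.image _).bddBelow ⟨c, hc, rfl⟩).trans (h1 p c).1
  have hcost_le : kmedCost δ U ≤ kmedCost δ' U :=
    Finset.sum_le_sum (fun p _ => hδU_le p)
  have hSU : kmedCost δ S ≤ kmedCost δ U := hSmin U hUcard
  have heq : kmedCost δ U = kmedCost δ' U := le_antisymm hcost_le (by linarith)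
  have hterm : ∀ p : X, sInf (δ p '' (U : Set X)) = sInf (δ' p '' (U : Set X)) := by
    have := (Finset.sum_eq_sum_iff_of_le (fun (p : X) (_ : p ∈ Finset.univ) => hδU_le p)).mp heq
    exact fun p => this p (Finset.mem_univ p)
  -- each point's `δ'`-nearest center in `U` is at true distance
  have hgval : ∀ p, δ' p (g p) = δ p (g p) := by
    intro p
    have e1 : sInf (δ' p '' (U : Set X)) = δ' p (g p) :=
      sInf_image_finset_eq δ' U p (g p) (hg1 p) (hg2 p)
    have e2 : sInf (δ p '' (U : Set X)) ≤ δ p (g p) :=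
      csInf_le (U.finite_toSet.image _).bddBelow ⟨g p, hg1 p, rfl⟩
    have e3 := (h1 p (g p)).1
    have e4 := hterm p
    linarith
  -- each point's `δ'`-nearest center in `U` lies in the same `S`-cluster
  have hkey : ∀ p, f (g p) = f p := by
    intro p
    by_contra hne
    have hcond : ¬ f p = f (g p) := fun h => hne h.symm
    have : δ' p (g p) = α * δ p (g p) := by
      show (if f p = f (g p) then _ else _) = _
      rw [if_neg hcond]
    have hz : δ p (g p) = 0 := by
      have := hgval p
      nlinarith [hnn p (g p)]
    have : p = g p := hsep p (g p) hz
    exact hne (by rw [← this])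
  -- `f` restricted to `U` is a bijection onto `S`
  have hSsub : S ⊆ U.image f := by
    intro c hc
    exact Finset.mem_image.mpr ⟨g c, hg1 c, by rw [hkey c, hfid c hc]⟩
  have hinj : Set.InjOn f (U : Set X) := by
    refine Finset.card_image_iff.mp (le_antisymm Finset.card_image_le ?_)
    calc U.card = S.card := by rw [hUcard, hScard]
      _ ≤ (U.image f).card := Finset.card_le_card hSsub
  -- cluster characterizations
  have hA : ∀ c ∈ S, {p : X | ∀ c' ∈ S, δ p c ≤ δ p c'} = {p : X | f p = c} := by
    intro c hc
    ext p
    simp only [Set.mem_setOf_eq]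
    exact ⟨fun hp => (hfu p c hc hp).symm, fun hp c' hc' => hp ▸ hf2 p c' hc'⟩
  have hB : ∀ u ∈ U, {p : X | ∀ c' ∈ U, δ' p u ≤ δ' p c'} = {p : X | g p = u} := by
    intro u hu
    ext p
    simp only [Set.mem_setOf_eq]
    exact ⟨fun hp => (hgu p u hu hp).symm, fun hp c' hc' => hp ▸ hg2 p c' hc'⟩
  -- conclude
  rw [hPeq, hQeq]
  ext A
  simp only [clustering, Set.mem_setOf_eq]
  constructor
  · rintro ⟨c, hc, rfl⟩
    refine ⟨g c, hg1 c, ?_⟩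
    rw [hA c hc, hB (g c) (hg1 c)]
    ext p
    simp only [Set.mem_setOf_eq]
    constructor
    · intro hp
      exact hinj (hg1 p) (hg1 c) (by rw [hkey p, hkey c, hp, hfid c hc])
    · intro hp
      rw [← hkey p, hp, hkey c, hfid c hc]
  · rintro ⟨u, hu, rfl⟩
    refine ⟨f u, hf1 u, ?_⟩
    rw [hA (f u) (hf1 u), hB u hu]
    ext p
    simp only [Set.mem_setOf_eq]
    constructor
    · intro hp
      rw [← hkey p, hp]
    · intro hp
      exact hinj (hg1 p) hu (by rw [hkey p, hp])
end

section
/- Let N be a finite nonempty set of unit vectors in ℝ^d and let X ⊆ ℝ^d be a finite nonempty set. For each u ∈ N, let p̄_u ∈ X be a point attaining max_{p∈X} ⟨p, u⟩, and let X̄ = { p̄_u : u ∈ N }. Then for any c ∈ ℝ^d and r ≥ 0, if δ_N(p̄_u, c) ≤ r for every u ∈ N, then δ_N(p, c) ≤ r for every p ∈ X; that is, any δ_N-ball containing the extreme points X̄ also contains all of X. -/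
/-- The polyhedral distance defined by a finite nonempty set `N` of unit vectors:
`δ_N(p, q) = max_{u ∈ N} ⟨p − q, u⟩`. -/
noncomputable def polyDist {d : ℕ} (N : Finset (EuclideanSpace ℝ (Fin d)))
    (hN : N.Nonempty) (p q : EuclideanSpace ℝ (Fin d)) : ℝ :=
  N.sup' hN (fun u => (inner ℝ (p - q) u : ℝ))

section PolyDist

variable {d : ℕ} {N : Finset (EuclideanSpace ℝ (Fin d))} (hN : N.Nonempty)
  {p c : EuclideanSpace ℝ (Fin d)}

theorem inner_sub_le_polyDist {u : EuclideanSpace ℝ (Fin d)} (hu : u ∈ N) :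
    inner ℝ (p - c) u ≤ polyDist N hN p c :=
  Finset.le_sup' (fun u => inner ℝ (p - c) u) hu

theorem polyDist_le_iff {r : ℝ} :
    polyDist N hN p c ≤ r ↔ ∀ u ∈ N, inner ℝ (p - c) u ≤ r :=
  Finset.sup'_le_iff hN _

end PolyDist

theorem ball_of_extreme_points_contains_all_general {d : ℕ}
    (N : Finset (EuclideanSpace ℝ (Fin d))) (hN : N.Nonempty)
    (X : Finset (EuclideanSpace ℝ (Fin d)))
    (pbar : EuclideanSpace ℝ (Fin d) → EuclideanSpace ℝ (Fin d))
    (hbar_max : ∀ u ∈ N, ∀ p ∈ X, (inner ℝ p u : ℝ) ≤ (inner ℝ (pbar u) u : ℝ))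
    (c : EuclideanSpace ℝ (Fin d)) (r : ℝ)
    (hball : ∀ u ∈ N, polyDist N hN (pbar u) c ≤ r) :
    ∀ p ∈ X, polyDist N hN p c ≤ r := by
  intro p hp
  refine (polyDist_le_iff hN).2 fun u hu => ?_
  calc inner ℝ (p - c) u = inner ℝ p u - inner ℝ c u := inner_sub_left p c u
    _ ≤ inner ℝ (pbar u) u - inner ℝ c u := by linarith [hbar_max u hu p hp]
    _ = inner ℝ (pbar u - c) u := (inner_sub_left (pbar u) c u).symm
    _ ≤ polyDist N hN (pbar u) c := inner_sub_le_polyDist hN hu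
    _ ≤ r := hball u hu

/-- Let `X̄ = {p̄_u : u ∈ N}` where `p̄_u ∈ X` maximizes `⟨·, u⟩` over `X`.
Any `δ_N`-ball containing all the extreme points `p̄_u` also contains all of `X`. -/
theorem ball_of_extreme_points_contains_all {d : ℕ}
    (N : Finset (EuclideanSpace ℝ (Fin d))) (hN : N.Nonempty)
    (hunit : ∀ u ∈ N, ‖u‖ = 1)
    (X : Finset (EuclideanSpace ℝ (Fin d))) (hX : X.Nonempty)
    (pbar : EuclideanSpace ℝ (Fin d) → EuclideanSpace ℝ (Fin d))
    (hbar_mem : ∀ u ∈ N, pbar u ∈ X)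
    (hbar_max : ∀ u ∈ N, ∀ p ∈ X, (inner ℝ p u : ℝ) ≤ (inner ℝ (pbar u) u : ℝ))
    (c : EuclideanSpace ℝ (Fin d)) (r : ℝ) (hr : 0 ≤ r)
    (hball : ∀ u ∈ N, polyDist N hN (pbar u) c ≤ r) :
    ∀ p ∈ X, polyDist N hN p c ≤ r :=
  ball_of_extreme_points_contains_all_general N hN X pbar hbar_max c r hball
end

section
/- Let (M, δ) be a metric space, α > 1, and c₁, c₂ ∈ M. If p ∈ M is α-proximal to c₁ (i.e., α·δ(p, c₁) < δ(p, c₂)) and q ∈ M is α-proximal to c₂ (i.e., α·δ(q, c₂) < δ(q, c₁)), then (α − 1)·δ(p, c₁) < δ(p, q). -/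
/-- In a metric space, if `p` is `α`-proximal to `c₁` and `q` is
`α`-proximal to `c₂` (with `α > 1`), then `(α − 1)·δ(p, c₁) < δ(p, q)`. -/
theorem center_proximity_weak_separation {M : Type*} [MetricSpace M]
    (α : ℝ) (hα : 1 < α) (c₁ c₂ p q : M)
    (hp : α * dist p c₁ < dist p c₂)
    (hq : α * dist q c₂ < dist q c₁) :
    (α - 1) * dist p c₁ < dist p q := by
  have h1 : dist p c₂ ≤ dist p q + dist q c₂ := dist_triangle p q c₂
  have h2 : dist q c₁ ≤ dist q p + dist p c₁ := dist_triangle q p c₁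
  have h3 : dist q p = dist p q := dist_comm q p
  nlinarith [dist_nonneg (x := p) (y := c₁), dist_nonneg (x := p) (y := q)]
end

section
/- Let (M, δ) be a metric space, α > 1, and c₁, c₂ ∈ M. If p ∈ M is α-proximal to c₁ (i.e., α·δ(p, c₁) < δ(p, c₂)) and q ∈ M is α-proximal to c₂ (i.e., α·δ(q, c₂) < δ(q, c₁)), then (α − 1)·δ(c₁, c₂) < (α + 1)·δ(p, q). -/
/-- In a metric space, if `p` is `α`-proximal to `c₁` and `q` is
`α`-proximal to `c₂` (with `α > 1`), then `(α − 1)·δ(c₁, c₂) < (α + 1)·δ(p, q)`. -/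
theorem center_proximity_centers_vs_points {M : Type*} [MetricSpace M]
    (α : ℝ) (hα : 1 < α) (c₁ c₂ p q : M)
    (hp : α * dist p c₁ < dist p c₂)
    (hq : α * dist q c₂ < dist q c₁) :
    (α - 1) * dist c₁ c₂ < (α + 1) * dist p q := by
  have h1 : dist p c₂ ≤ dist p q + dist q c₂ := dist_triangle p q c₂
  have h2 : dist q c₁ ≤ dist q p + dist p c₁ := dist_triangle q p c₁
  have h3 : dist c₁ c₂ ≤ dist c₁ p + dist p q + dist q c₂ := dist_triangle4 c₁ p q c₂
  have e1 : dist q p = dist p q := dist_comm q p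
  have e2 : dist c₁ p = dist p c₁ := dist_comm c₁ p
  nlinarith [dist_nonneg (x := p) (y := c₁), dist_nonneg (x := q) (y := c₂)]
end

section
/- Let (M, δ) be a metric space, α > 1, and c₁, c₂ ∈ M. Suppose p and p′ are both α-proximal to c₁ (i.e., α·δ(x, c₁) < δ(x, c₂) for x ∈ {p, p′}) and q is α-proximal to c₂ (i.e., α·δ(q, c₂) < δ(q, c₁)). Then (α − 1)·δ(p, p′) < (2α/(α − 1))·δ(p, q); in particular, δ(p, p′) < δ(p, q) whenever α ≥ 2 + √3. -/
/-- In a metric space, if `p, p′` are `α`-proximal to `c₁` and `q`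
is `α`-proximal to `c₂` (with `α > 1`), then
`(α − 1)·δ(p, p′) < (2α/(α − 1))·δ(p, q)`; in particular `δ(p, p′) < δ(p, q)`
whenever `α ≥ 2 + √3`. -/
theorem center_proximity_intra_vs_inter {M : Type*} [MetricSpace M]
    (α : ℝ) (hα : 1 < α) (c₁ c₂ p p' q : M)
    (hp : α * dist p c₁ < dist p c₂)
    (hp' : α * dist p' c₁ < dist p' c₂)
    (hq : α * dist q c₂ < dist q c₁) :
    (α - 1) * dist p p' < (2 * α / (α - 1)) * dist p q ∧
      (2 + Real.sqrt 3 ≤ α → dist p p' < dist p q) := by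
  have hα0 : (0:ℝ) < α - 1 := by linarith
  have hαpos : (0:ℝ) < α := by linarith
  have t1 : dist p c₂ ≤ dist p q + dist q c₂ := dist_triangle _ _ _
  have t2 : dist q c₁ ≤ dist p q + dist p c₁ := by
    have := dist_triangle q p c₁; rwa [dist_comm q p] at this
  have t3 : dist p' c₂ ≤ dist p' c₁ + dist c₁ c₂ := dist_triangle _ _ _
  have t4 : dist c₁ c₂ ≤ dist q c₁ + dist q c₂ := dist_triangle_left _ _ _
  have t5 : dist p p' ≤ dist p c₁ + dist p' c₁ := dist_triangle_right _ _ _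
  -- (α−1) * dist p c₁ < dist p q
  have h1 : (α - 1) * dist p c₁ < dist p q := by
    have e : α * (α * dist p c₁) < α * (dist p q + dist q c₂) :=
      mul_lt_mul_of_pos_left (lt_of_lt_of_le hp t1) hαpos
    -- α * dist q c₂ < dist p q + dist p c₁
    have e2 : α * dist q c₂ < dist p q + dist p c₁ := lt_of_lt_of_le hq t2
    nlinarith [dist_nonneg (x := p) (y := c₁)]
  -- (α−1) * dist p' c₁ < dist c₁ c₂
  have h2 : (α - 1) * dist p' c₁ < dist c₁ c₂ := by nlinarith [lt_of_lt_of_le hp' t3]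
  -- α * dist c₁ c₂ < (α+1) * (dist p q + dist p c₁)
  have h3 : α * dist c₁ c₂ < (α + 1) * (dist p q + dist p c₁) := by
    have e : α * dist c₁ c₂ ≤ α * (dist q c₁ + dist q c₂) :=
      mul_le_mul_of_nonneg_left t4 hαpos.le
    have e2 : α * dist q c₂ < dist p q + dist p c₁ := lt_of_lt_of_le hq t2
    nlinarith
  have key : (α - 1)^2 * dist p p' < 2 * α * dist p q := by
    have e1 : α * (α - 1) * ((α - 1) * dist p c₁) < α * (α - 1) * dist p q :=
      mul_lt_mul_of_pos_left h1 (by positivity)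
    have e2 : α * (α - 1) * ((α - 1) * dist p' c₁) < α * (α - 1) * dist c₁ c₂ :=
      mul_lt_mul_of_pos_left h2 (by positivity)
    have e3 : (α - 1) * (α * dist c₁ c₂) < (α - 1) * ((α + 1) * (dist p q + dist p c₁)) :=
      mul_lt_mul_of_pos_left h3 hα0
    have e4 : (α + 1) * ((α - 1) * dist p c₁) < (α + 1) * dist p q :=
      mul_lt_mul_of_pos_left h1 (by linarith)
    have e5 : α * ((α - 1)^2 * dist p p') ≤ α * ((α - 1)^2 * (dist p c₁ + dist p' c₁)) :=
      mul_le_mul_of_nonneg_left (mul_le_mul_of_nonneg_left t5 (by positivity)) hαpos.le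
    nlinarith
  refine ⟨?_, ?_⟩
  · rw [div_mul_eq_mul_div, lt_div_iff₀ hα0]
    nlinarith
  · intro hs
    have h3' : Real.sqrt 3 ^ 2 = 3 := Real.sq_sqrt (by norm_num)
    have hs3 : (0:ℝ) ≤ Real.sqrt 3 := Real.sqrt_nonneg _
    have h2a : 2 * α ≤ (α - 1)^2 := by nlinarith
    have hd : 2 * α * dist p q ≤ (α - 1)^2 * dist p q :=
      mul_le_mul_of_nonneg_right h2a dist_nonneg
    have hlt : (α - 1)^2 * dist p p' < (α - 1)^2 * dist p q := lt_of_lt_of_le key hd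
    exact lt_of_mul_lt_mul_left hlt (by positivity)
end

section
/- Let (M, δ) be a metric space, α > 1, and c₁, c₂ ∈ M. Suppose p, p′, p″ are all α-proximal to c₁ (i.e., α·δ(x, c₁) < δ(x, c₂) for x ∈ {p, p′, p″}) and q is α-proximal to c₂ (i.e., α·δ(q, c₂) < δ(q, c₁)). Then (α − 1)·δ(p′, p″) < (2(α + 1)/(α − 1))·δ(p, q); in particular, δ(p′, p″) < δ(p, q) whenever α ≥ 2 + √5. -/
/-- In a metric space, if `p, p′, p″` are `α`-proximal to `c₁` and `q`
is `α`-proximal to `c₂` (with `α > 1`), then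
`(α − 1)·δ(p′, p″) < (2(α + 1)/(α − 1))·δ(p, q)`; in particular `δ(p′, p″) < δ(p, q)`
whenever `α ≥ 2 + √5`. -/
theorem center_proximity_any_intra_vs_inter {M : Type*} [MetricSpace M]
    (α : ℝ) (hα : 1 < α) (c₁ c₂ p p' p'' q : M)
    (hp : α * dist p c₁ < dist p c₂)
    (hp' : α * dist p' c₁ < dist p' c₂)
    (hp'' : α * dist p'' c₁ < dist p'' c₂)
    (hq : α * dist q c₂ < dist q c₁) :
    (α - 1) * dist p' p'' < (2 * (α + 1) / (α - 1)) * dist p q ∧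
      (2 + Real.sqrt 5 ≤ α → dist p' p'' < dist p q) := by
  have hpos : (0:ℝ) < α - 1 := by linarith
  have t1 : dist p' c₂ ≤ dist p' c₁ + dist c₁ c₂ := dist_triangle _ _ _
  have t2 : dist p'' c₂ ≤ dist p'' c₁ + dist c₁ c₂ := dist_triangle _ _ _
  have t3 : dist p c₂ ≤ dist p q + dist q c₂ := dist_triangle _ _ _
  have t4 : dist q c₁ ≤ dist q p + dist p c₁ := dist_triangle _ _ _
  have t5 : dist c₁ c₂ ≤ dist c₁ p + dist p q + dist q c₂ :=
    (dist_triangle4 c₁ p q c₂)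
  have t6 : dist p' p'' ≤ dist p' c₁ + dist c₁ p'' := dist_triangle _ _ _
  have hqp : dist q p = dist p q := dist_comm _ _
  have hc1p : dist c₁ p = dist p c₁ := dist_comm _ _
  have hc1p'' : dist c₁ p'' = dist p'' c₁ := dist_comm _ _
  have h1 : (α - 1) * dist p' c₁ < dist c₁ c₂ := by nlinarith [dist_nonneg (x := p') (y := c₁)]
  have h2 : (α - 1) * dist p'' c₁ < dist c₁ c₂ := by nlinarith [dist_nonneg (x := p'') (y := c₁)]
  have h3 : (α - 1) * (dist p c₁ + dist q c₂) < 2 * dist p q := by nlinarith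
  have h4 : (α - 1) * dist c₁ c₂ < (α + 1) * dist p q := by nlinarith
  have hA : (α - 1) * dist p' p'' < 2 * dist c₁ c₂ := by nlinarith
  have key : (α - 1) * dist p' p'' * (α - 1) < 2 * (α + 1) * dist p q := by
    nlinarith [mul_lt_mul_of_pos_right hA hpos]
  have main : (α - 1) * dist p' p'' < (2 * (α + 1) / (α - 1)) * dist p q := by
    rw [div_mul_eq_mul_div, lt_div_iff₀ hpos]
    linarith
  refine ⟨main, fun hα5 => ?_⟩
  have hs : Real.sqrt 5 ^ 2 = 5 := Real.sq_sqrt (by norm_num)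
  have hs0 : (0:ℝ) ≤ Real.sqrt 5 := Real.sqrt_nonneg 5
  have h5 : 2 * (α + 1) ≤ (α - 1) * (α - 1) := by nlinarith
  have : (α - 1) * dist p' p'' * (α - 1) < (α - 1) * dist p q * (α - 1) := by
    nlinarith [dist_nonneg (x := p) (y := q)]
  have := lt_of_mul_lt_mul_right this hpos.le
  exact lt_of_mul_lt_mul_left this hpos.le
end

section
/- Let ℝ^d carry the Euclidean metric δ(x, y) = ‖x − y‖, let α ≥ 2 + √3, and let c₁, c₂ ∈ ℝ^d. Suppose p, p′, p″ ∈ ℝ^d are all α-proximal to c₁ (i.e., α·‖x − c₁‖ < ‖x − c₂‖ for x ∈ {p, p′, p″}) and q ∈ ℝ^d is α-proximal to c₂ (i.e., α·‖q − c₂‖ < ‖q − c₁‖). Then ‖p − p′‖ ≤ ‖p″ − q‖: every intra-cluster distance is at most every inter-cluster distance. -/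
/-!
The set of points `α`-proximal to `c₁` against `c₂` is the open Apollonius ball with centre
`c₁ + (α² - 1)⁻¹ • (c₁ - c₂)` and radius `α / (α² - 1) * ‖c₁ - c₂‖`. The two balls of a pair of
centres have equal radii `R`, and their centres are `(α² + 1) / (α² - 1) * ‖c₁ - c₂‖` apart,
which is at least `4 R` exactly when `α² - 4α + 1 ≥ 0`, i.e. when `α ≥ 2 + √3`. Then two points
of one ball are less than `2 R` apart, while a point of one ball and a point of the other are
more than `2 R` apart.
-/

open Metric

section Apollonius

variable {E : Type*} [NormedAddCommGroup E]

noncomputable def apolloniusCenter [InnerProductSpace ℝ E] (α : ℝ) (c₁ c₂ : E) : E :=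
  c₁ + (α ^ 2 - 1)⁻¹ • (c₁ - c₂)

noncomputable def apolloniusRadius (α : ℝ) (c₁ c₂ : E) : ℝ :=
  α / (α ^ 2 - 1) * dist c₁ c₂

theorem apolloniusRadius_comm (α : ℝ) (c₁ c₂ : E) :
    apolloniusRadius α c₁ c₂ = apolloniusRadius α c₂ c₁ := by
  rw [apolloniusRadius, apolloniusRadius, dist_comm]

theorem norm_sub_sq_sub_sq_mul_norm_sub_sq [InnerProductSpace ℝ E] {α : ℝ} (hα : α ^ 2 ≠ 1)
    (c₁ c₂ x : E) :
    ‖x - c₂‖ ^ 2 - α ^ 2 * ‖x - c₁‖ ^ 2 =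
      (α ^ 2 - 1) * (apolloniusRadius α c₁ c₂ ^ 2 - ‖x - apolloniusCenter α c₁ c₂‖ ^ 2) := by
  have ht : (α ^ 2 - 1)⁻¹ * (α ^ 2 - 1) = 1 := inv_mul_cancel₀ (sub_ne_zero.mpr hα)
  have hx₂ : x - c₂ = (x - c₁) + (c₁ - c₂) := by abel
  have hm : x - apolloniusCenter α c₁ c₂ = (x - c₁) - (α ^ 2 - 1)⁻¹ • (c₁ - c₂) := by
    rw [apolloniusCenter]; abel
  rw [hx₂, hm, apolloniusRadius, dist_eq_norm, norm_add_sq_real, norm_sub_sq_real (x - c₁),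
    real_inner_smul_right, norm_smul, Real.norm_eq_abs, div_eq_mul_inv]
  simp only [mul_pow, sq_abs]
  linear_combination
    -(2 * inner ℝ (x - c₁) (c₁ - c₂) + (1 + (α ^ 2 - 1)⁻¹ * (α ^ 2 - 1)) * ‖c₁ - c₂‖ ^ 2) * ht

theorem mem_ball_apolloniusCenter [InnerProductSpace ℝ E] {α : ℝ} (hα : 1 < α) {c₁ c₂ x : E}
    (hx : α * ‖x - c₁‖ < ‖x - c₂‖) :
    x ∈ ball (apolloniusCenter α c₁ c₂) (apolloniusRadius α c₁ c₂) := by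
  have hden : 0 < α ^ 2 - 1 := by nlinarith
  have hR : 0 ≤ apolloniusRadius α c₁ c₂ := by
    rw [apolloniusRadius]; have := dist_nonneg (x := c₁) (y := c₂); positivity
  have hpow : 0 < ‖x - c₂‖ ^ 2 - α ^ 2 * ‖x - c₁‖ ^ 2 := by
    rw [sub_pos, ← mul_pow]
    exact pow_lt_pow_left₀ hx (by positivity) two_ne_zero
  rw [norm_sub_sq_sub_sq_mul_norm_sub_sq (one_lt_pow₀ hα two_ne_zero).ne',
    mul_pos_iff_of_pos_left hden, sub_pos] at hpow
  rw [mem_ball, dist_eq_norm]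
  exact lt_of_pow_lt_pow_left₀ 2 hR hpow

theorem dist_apolloniusCenter_apolloniusCenter [InnerProductSpace ℝ E] {α : ℝ} (hα : 1 < α)
    (c₁ c₂ : E) :
    dist (apolloniusCenter α c₁ c₂) (apolloniusCenter α c₂ c₁) =
      (α ^ 2 + 1) / (α ^ 2 - 1) * dist c₁ c₂ := by
  have hden : 0 < α ^ 2 - 1 := by nlinarith
  have h : apolloniusCenter α c₁ c₂ - apolloniusCenter α c₂ c₁ =
      ((α ^ 2 + 1) / (α ^ 2 - 1)) • (c₁ - c₂) := by
    rw [apolloniusCenter, apolloniusCenter,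
      show (α ^ 2 + 1) / (α ^ 2 - 1) = 1 + 2 * (α ^ 2 - 1)⁻¹ by field_simp; ring]
    module
  rw [dist_eq_norm, h, norm_smul, Real.norm_eq_abs, abs_of_pos (by positivity), dist_eq_norm]

end Apollonius

theorem dist_lt_dist_of_mem_ball {X : Type*} [PseudoMetricSpace X] {a b x y z w : X} {R : ℝ}
    (hx : x ∈ ball a R) (hy : y ∈ ball a R) (hz : z ∈ ball a R) (hw : w ∈ ball b R)
    (hab : 4 * R ≤ dist a b) : dist x y < dist z w := by
  rw [mem_ball] at hx hy hz hw
  have hxy := dist_triangle_right x y a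
  have hab' := dist_triangle4 a z w b
  rw [dist_comm a z] at hab'
  linarith

theorem four_mul_le_sq_add_one {α : ℝ} (hα : 2 + √3 ≤ α) : 4 * α ≤ α ^ 2 + 1 := by
  have h3 : √3 ^ 2 = 3 := Real.sq_sqrt (by norm_num)
  nlinarith [Real.sqrt_nonneg 3, sq_nonneg (α - 2 - √3)]

/-- In Euclidean space with `α ≥ 2 + √3`, if `p, p′, p″` are `α`-proximal
to `c₁` and `q` is `α`-proximal to `c₂`, then every intra-cluster distance is at most
every inter-cluster distance: `‖p − p′‖ ≤ ‖p″ − q‖`. -/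
theorem intra_le_inter_euclidean {d : ℕ}
    (α : ℝ) (hα : 2 + Real.sqrt 3 ≤ α) (c₁ c₂ p p' p'' q : EuclideanSpace ℝ (Fin d))
    (hp : α * ‖p - c₁‖ < ‖p - c₂‖)
    (hp' : α * ‖p' - c₁‖ < ‖p' - c₂‖)
    (hp'' : α * ‖p'' - c₁‖ < ‖p'' - c₂‖)
    (hq : α * ‖q - c₂‖ < ‖q - c₁‖) :
    ‖p - p'‖ ≤ ‖p'' - q‖ := by
  have hα₁ : 1 < α := by linarith [Real.sqrt_nonneg 3]
  have hq' := mem_ball_apolloniusCenter hα₁ hq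
  rw [apolloniusRadius_comm] at hq'
  rw [← dist_eq_norm, ← dist_eq_norm]
  refine (dist_lt_dist_of_mem_ball (mem_ball_apolloniusCenter hα₁ hp)
    (mem_ball_apolloniusCenter hα₁ hp') (mem_ball_apolloniusCenter hα₁ hp'') hq' ?_).le
  have hden : 0 < α ^ 2 - 1 := by nlinarith
  rw [dist_apolloniusCenter_apolloniusCenter hα₁, apolloniusRadius, ← mul_assoc, mul_div_assoc']
  gcongr
  exact four_mul_le_sq_add_one hα
end

section
/- Let ℝ^d carry the Euclidean norm, let α > 1, and let c₁, c₂, p, p′ ∈ ℝ^d. If ‖p − c₂‖ > α·‖p − c₁‖ and ‖p′ − c₂‖ > α·‖p′ − c₁‖, then ‖p − p′‖ < (2α/(α² − 1))·‖c₁ − c₂‖. (Both p and p′ lie strictly inside the Apollonius ball { x : ‖x − c₂‖ = α·‖x − c₁‖ } around c₁, whose diameter is (2α/(α² − 1))·‖c₁ − c₂‖.) -/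
open scoped RealInnerProductSpace

/-- Auxiliary: a point strictly inside the Apollonius sphere is within distance
`α/(α²−1)·‖c₁−c₂‖` of the center `c₁ + (α²−1)⁻¹ • (c₁ − c₂)`. -/
lemma apollonius_center_bound {d : ℕ}
    (α : ℝ) (hα : 1 < α) (c₁ c₂ p : EuclideanSpace ℝ (Fin d))
    (hp : α * ‖p - c₁‖ < ‖p - c₂‖) :
    ‖p - (c₁ + (α ^ 2 - 1)⁻¹ • (c₁ - c₂))‖ < α / (α ^ 2 - 1) * ‖c₁ - c₂‖ := by
  set s : ℝ := α ^ 2 - 1 with hs_def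
  have hs : 0 < s := by nlinarith
  set a : EuclideanSpace ℝ (Fin d) := p - c₁ with ha
  set b : EuclideanSpace ℝ (Fin d) := c₁ - c₂ with hb
  have hab : p - c₂ = a + b := by simp [ha, hb]
  have hpm : p - (c₁ + s⁻¹ • b) = a - s⁻¹ • b := by simp only [ha]; abel
  -- squared hypothesis
  have hsq : (α * ‖a‖) ^ 2 < ‖a + b‖ ^ 2 := by
    rw [← hab]
    have h0 : 0 ≤ α * ‖a‖ := by positivity
    nlinarith [hp, h0]
  have e1 : ‖a + b‖ ^ 2 = ‖a‖ ^ 2 + 2 * ⟪a, b⟫ + ‖b‖ ^ 2 := by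
    rw [@norm_add_sq_real]
  have e2 : ‖a - s⁻¹ • b‖ ^ 2 = ‖a‖ ^ 2 - 2 * (s⁻¹ * ⟪a, b⟫) + s⁻¹ ^ 2 * ‖b‖ ^ 2 := by
    rw [@norm_sub_sq_real, real_inner_smul_right, norm_smul, Real.norm_eq_abs,
      abs_of_pos (inv_pos.mpr hs)]
    ring
  have key : ‖a - s⁻¹ • b‖ ^ 2 < (α / s * ‖b‖) ^ 2 := by
    rw [e2]
    have hα2 : α ^ 2 = s + 1 := by rw [hs_def]; ring
    have h1 : s * ‖a‖ ^ 2 < 2 * ⟪a, b⟫ + ‖b‖ ^ 2 := by nlinarith [hsq, e1]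
    have hsinv : s⁻¹ * s = 1 := inv_mul_cancel₀ (ne_of_gt hs)
    have hR : (α / s * ‖b‖) ^ 2 = (s + 1) * ‖b‖ ^ 2 * s⁻¹ ^ 2 := by
      rw [mul_pow, div_pow, hα2, div_eq_mul_inv, inv_pow]
      ring
    rw [hR]
    have h3 : ‖a‖ ^ 2 < 2 * (s⁻¹ * ⟪a, b⟫) + s⁻¹ * ‖b‖ ^ 2 := by
      nlinarith [mul_lt_mul_of_pos_left h1 (inv_pos.mpr hs), hsinv]
    have h4 : s * s⁻¹ ^ 2 = s⁻¹ := by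
      rw [pow_two, ← mul_assoc, mul_inv_cancel₀ (ne_of_gt hs), one_mul]
    have hR2 : (s + 1) * ‖b‖ ^ 2 * s⁻¹ ^ 2 = s⁻¹ * ‖b‖ ^ 2 + s⁻¹ ^ 2 * ‖b‖ ^ 2 := by
      linear_combination ‖b‖ ^ 2 * h4
    rw [hR2]
    linarith [h3]
  rw [hpm]
  have hrpos : 0 ≤ α / s * ‖b‖ := by positivity
  exact lt_of_pow_lt_pow_left₀ 2 hrpos key

/-- In Euclidean space with `α > 1`, if `p` and `p′` both lie strictly
inside the Apollonius ball `{x : ‖x − c₂‖ = α·‖x − c₁‖}` around `c₁`, then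
`‖p − p′‖ < (2α/(α² − 1))·‖c₁ − c₂‖`. -/
theorem apollonius_diameter_bound {d : ℕ}
    (α : ℝ) (hα : 1 < α) (c₁ c₂ p p' : EuclideanSpace ℝ (Fin d))
    (hp : α * ‖p - c₁‖ < ‖p - c₂‖)
    (hp' : α * ‖p' - c₁‖ < ‖p' - c₂‖) :
    ‖p - p'‖ < (2 * α / (α ^ 2 - 1)) * ‖c₁ - c₂‖ := by
  set m : EuclideanSpace ℝ (Fin d) := c₁ + (α ^ 2 - 1)⁻¹ • (c₁ - c₂)
  have h1 := apollonius_center_bound α hα c₁ c₂ p hp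
  have h2 := apollonius_center_bound α hα c₁ c₂ p' hp'
  have htri : ‖p - p'‖ ≤ ‖p - m‖ + ‖p' - m‖ := by
    have := norm_sub_le (p - m) (p' - m)
    simpa [sub_sub_sub_cancel_right] using this
  have : ‖p - m‖ + ‖p' - m‖ < 2 * (α / (α ^ 2 - 1) * ‖c₁ - c₂‖) := by linarith
  calc ‖p - p'‖ ≤ ‖p - m‖ + ‖p' - m‖ := htri
    _ < 2 * (α / (α ^ 2 - 1) * ‖c₁ - c₂‖) := this
    _ = (2 * α / (α ^ 2 - 1)) * ‖c₁ - c₂‖ := by ring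
end

section
/- Let ℝ^d carry the Euclidean norm, let α > 1, and let c₁, c₂, p, q ∈ ℝ^d. If ‖p − c₂‖ > α·‖p − c₁‖ and ‖q − c₁‖ > α·‖q − c₂‖, then ‖p − q‖ > ((α − 1)/(α + 1))·‖c₁ − c₂‖. (The open Apollonius balls around c₁ and around c₂ with parameter α are at distance ((α − 1)/(α + 1))·‖c₁ − c₂‖ from each other.) -/
/-- In Euclidean space with `α > 1`, if `p` lies strictly inside the
Apollonius ball around `c₁` and `q` strictly inside the Apollonius ball around `c₂`,
then `‖p − q‖ > ((α − 1)/(α + 1))·‖c₁ − c₂‖. -/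
theorem apollonius_gap_bound {d : ℕ}
    (α : ℝ) (hα : 1 < α) (c₁ c₂ p q : EuclideanSpace ℝ (Fin d))
    (hp : α * ‖p - c₁‖ < ‖p - c₂‖)
    (hq : α * ‖q - c₂‖ < ‖q - c₁‖) :
    ((α - 1) / (α + 1)) * ‖c₁ - c₂‖ < ‖p - q‖ := by
  have t1 : ‖p - c₂‖ ≤ ‖p - q‖ + ‖q - c₂‖ := by
    simpa [dist_eq_norm] using dist_triangle p q c₂
  have t2 : ‖q - c₁‖ ≤ ‖q - p‖ + ‖p - c₁‖ := by
    simpa [dist_eq_norm] using dist_triangle q p c₁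
  have t3 : ‖c₁ - c₂‖ ≤ ‖c₁ - p‖ + ‖p - q‖ + ‖q - c₂‖ := by
    simpa [dist_eq_norm] using dist_triangle4 c₁ p q c₂
  have e1 : ‖q - p‖ = ‖p - q‖ := norm_sub_rev q p
  have e2 : ‖c₁ - p‖ = ‖p - c₁‖ := norm_sub_rev c₁ p
  have hpos : (0:ℝ) < α + 1 := by linarith
  rw [div_mul_eq_mul_div, div_lt_iff₀ hpos]
  nlinarith [norm_nonneg (p - c₁), norm_nonneg (q - c₂), norm_nonneg (p - q),
    norm_nonneg (c₁ - c₂)]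
end

section
/- Let (M, δ) be a metric space, X ⊆ M a finite set, and o₁, …, o_k ∈ M distinct centers whose induced clusters O_i = { p ∈ X : δ(p, o_i) < δ(p, o_j) for all j ≠ i } are all nonempty and partition X, and which satisfy α-center proximity (α·δ(p, o_i) < δ(p, o_j) for every p ∈ O_i and every j ≠ i) with α ≥ 3. Then for each i, any point of X nearest to o_i belongs to the cluster O_i. -/
/-- Let `o₁, …, o_k` be distinct centers in a metric space whose induced
clusters `O i = {p ∈ X : δ(p, o_i) < δ(p, o_j) for all j ≠ i}` are nonempty and cover `X`,
satisfying `α`-center proximity with `α ≥ 3`. Then any point of `X` nearest to `o_i`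
belongs to the cluster `O i`. -/
theorem nearest_point_in_own_cluster {M : Type*} [MetricSpace M]
    (X : Finset M) (k : ℕ) (o : Fin k → M) (hinj : Function.Injective o)
    (α : ℝ) (hα : 3 ≤ α)
    (O : Fin k → Set M)
    (hO : ∀ i, O i = {p : M | p ∈ X ∧ ∀ j, j ≠ i → dist p (o i) < dist p (o j)})
    (hne : ∀ i, (O i).Nonempty)
    (hcover : ∀ p ∈ X, ∃ i, p ∈ O i)
    (hprox : ∀ i, ∀ p ∈ O i, ∀ j, j ≠ i → α * dist p (o i) < dist p (o j))
    (i : Fin k) (p : M) (hp : p ∈ X)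
    (hnear : ∀ q ∈ X, dist (o i) p ≤ dist (o i) q) :
    p ∈ O i := by
  obtain ⟨j, hpj⟩ := hcover p hp
  rcases eq_or_ne j i with rfl | hji
  · exact hpj
  · exfalso
    obtain ⟨q, hq⟩ := hne i
    have hqX : q ∈ X := ((hO i ▸ hq) : q ∈ {p : M | p ∈ X ∧ _}).1
    have h1 : α * dist p (o j) < dist p (o i) := hprox j p hpj i hji.symm
    have h2 : dist (o i) p ≤ dist (o i) q := hnear q hqX
    have h3 : α * dist q (o i) < dist q (o j) :=
      hprox i q hq j hji
    have h4 : dist q (o j) ≤ dist q (o i) + dist (o i) (o j) := dist_triangle _ _ _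
    have h5 : dist (o i) (o j) ≤ dist (o i) p + dist p (o j) := dist_triangle _ _ _
    have e1 : dist (o i) p = dist p (o i) := dist_comm _ _
    have e2 : dist (o i) q = dist q (o i) := dist_comm _ _
    have n1 : (0:ℝ) ≤ dist p (o j) := dist_nonneg
    have n2 : (0:ℝ) ≤ dist q (o i) := dist_nonneg
    nlinarith [dist_nonneg (x := p) (y := o i)]
end

section
/- Let (M, δ) be a metric space, X ⊆ M a finite set, and o₁, …, o_k ∈ M distinct centers whose induced clusters O_i = { p ∈ X : δ(p, o_i) < δ(p, o_j) for all j ≠ i } are all nonempty and partition X, and which satisfy α-center proximity (α·δ(p, o_i) < δ(p, o_j) for every p ∈ O_i and every j ≠ i) with α ≥ 2 + √3. For each i, let nn_i ∈ X be a point of X nearest to o_i. Then nn_i ∈ O_i for every i, and for every p ∈ O_i and every j ≠ i one has δ(p, nn_i) < δ(p, nn_j); consequently, the clustering of X induced by the discrete center set {nn₁, …, nn_k} coincides with the clustering induced by {o₁, …, o_k}. In particular, for α-stable instances with α ≥ 2 + √3, any continuous optimal k-clustering is also realized by a discrete center set chosen from X. -/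
/-- Let `o₁, …, o_k` be distinct centers in a metric space whose induced
clusters `O i = {p ∈ X : δ(p, o_i) < δ(p, o_j) for all j ≠ i}` are nonempty and cover `X`,
satisfying `α`-center proximity with `α ≥ 2 + √3`. Let `nn i ∈ X` be a nearest point of `X`
to `o_i`. Then `nn i ∈ O i` for every `i`, every `p ∈ O i` is strictly closer to `nn i` than
to any `nn j` with `j ≠ i`, and the clustering induced by the discrete center set
`{nn₁, …, nn_k}` coincides with the one induced by `{o₁, …, o_k}`. -/
theorem discrete_centers_recover_clustering {M : Type*} [MetricSpace M]
    (X : Finset M) (k : ℕ) (o : Fin k → M) (hinj : Function.Injective o)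
    (α : ℝ) (hα : 2 + Real.sqrt 3 ≤ α)
    (O : Fin k → Set M)
    (hO : ∀ i, O i = {p : M | p ∈ X ∧ ∀ j, j ≠ i → dist p (o i) < dist p (o j)})
    (hne : ∀ i, (O i).Nonempty)
    (hcover : ∀ p ∈ X, ∃ i, p ∈ O i)
    (hprox : ∀ i, ∀ p ∈ O i, ∀ j, j ≠ i → α * dist p (o i) < dist p (o j))
    (nn : Fin k → M)
    (hnn_mem : ∀ i, nn i ∈ X)
    (hnn_near : ∀ i, ∀ q ∈ X, dist (o i) (nn i) ≤ dist (o i) q) :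
    (∀ i, nn i ∈ O i) ∧
    (∀ i, ∀ p ∈ O i, ∀ j, j ≠ i → dist p (nn i) < dist p (nn j)) ∧
    (∀ i, {p : M | p ∈ X ∧ ∀ j, j ≠ i → dist p (nn i) < dist p (nn j)} = O i) := by
  have h3 : Real.sqrt 3 ^ 2 = 3 := Real.sq_sqrt (by norm_num)
  have hs : (1:ℝ) ≤ Real.sqrt 3 := by nlinarith [Real.sqrt_nonneg 3]
  have hα3 : (3:ℝ) ≤ α := by linarith
  have hα0 : (0:ℝ) < α := by linarith
  have key2 : α ^ 2 - 2 * α - 1 > 0 := by nlinarith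
  have h1 : ∀ i, nn i ∈ O i := by
    intro i
    obtain ⟨j, hj⟩ := hcover (nn i) (hnn_mem i)
    by_cases hji : j = i
    · subst hji; exact hj
    · exfalso
      obtain ⟨p, hp⟩ := hne i
      have hpX : p ∈ X := by rw [hO i] at hp; exact hp.1
      have hd1 : dist (o i) (nn i) ≤ dist p (o i) := by
        have := hnn_near i p hpX
        rwa [dist_comm (o i) p] at this
      have hq : α * dist (nn i) (o j) < dist (nn i) (o i) :=
        hprox j (nn i) hj i (fun h => hji h.symm)
      have hq2 : dist (nn i) (o i) ≤ dist p (o i) := by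
        rw [dist_comm (nn i) (o i)]; exact hd1
      have hpij : α * dist p (o i) < dist p (o j) := hprox i p hp j hji
      have htri : dist p (o j) ≤ dist p (o i) + dist (o i) (nn i) + dist (nn i) (o j) :=
        dist_triangle4 p (o i) (nn i) (o j)
      nlinarith [(dist_nonneg : (0:ℝ) ≤ dist p (o i)), (dist_nonneg : (0:ℝ) ≤ dist (nn i) (o j)),
        mul_lt_mul_of_pos_left hpij hα0, mul_le_mul_of_nonneg_left htri hα0.le]
  have h2 : ∀ i, ∀ p ∈ O i, ∀ j, j ≠ i → dist p (nn i) < dist p (nn j) := by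
    intro i p hp j hj
    have hpX : p ∈ X := by rw [hO i] at hp; exact hp.1
    have hr : dist (o i) (nn i) ≤ dist p (o i) := by
      have := hnn_near i p hpX
      rwa [dist_comm (o i) p] at this
    have hub : dist p (nn i) ≤ 2 * dist p (o i) :=
      calc dist p (nn i) ≤ dist p (o i) + dist (o i) (nn i) := dist_triangle _ _ _
        _ ≤ 2 * dist p (o i) := by linarith
    by_contra hcon
    push_neg at hcon
    have h1' : dist p (nn j) ≤ 2 * dist p (o i) := le_trans hcon hub
    have hpij : α * dist p (o i) < dist p (o j) := hprox i p hp j hj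
    have hprj : α * dist (nn j) (o j) < dist (nn j) (o i) :=
      hprox j (nn j) (h1 j) i (fun h => hj h.symm)
    have hb : dist (nn j) (o i) ≤ 3 * dist p (o i) :=
      calc dist (nn j) (o i) ≤ dist (nn j) p + dist p (o i) := dist_triangle _ _ _
        _ ≤ 3 * dist p (o i) := by rw [dist_comm (nn j) p]; linarith
    have hlb : dist p (o j) ≤ dist p (nn j) + dist (nn j) (o j) := dist_triangle _ _ _
    nlinarith [(dist_nonneg : (0:ℝ) ≤ dist p (o i)), (dist_nonneg : (0:ℝ) ≤ dist (nn j) (o j)),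
      mul_lt_mul_of_pos_left hpij hα0, mul_le_mul_of_nonneg_left hlb hα0.le,
      mul_le_mul_of_nonneg_left h1' hα0.le]
  refine ⟨h1, h2, ?_⟩
  intro i
  ext p
  simp only [Set.mem_setOf_eq]
  constructor
  · rintro ⟨hpX, hlt⟩
    obtain ⟨l, hl⟩ := hcover p hpX
    by_cases hli : l = i
    · subst hli; exact hl
    · exact absurd (hlt l hli) (not_lt.2 (h2 l p hl i (fun h => hli h.symm)).le)
  · intro hp
    have hpX : p ∈ X := by rw [hO i] at hp; exact hp.1
    exact ⟨hpX, fun j hj => h2 i p hp j hj⟩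
end

section
/- Let X be a finite set of n ≥ 2 points in Euclidean space ℝ^d, partitioned into k ≥ 2 nonempty clusters X₁, …, X_k with centers c₁, …, c_k ∈ ℝ^d satisfying α-center proximity with α ≥ 2 + √3 (i.e., α·‖p − c_i‖ < ‖p − c_j‖ for every p ∈ X_i and j ≠ i). Let T be a Euclidean minimum spanning tree of X (a spanning tree on vertex set X minimizing the total Euclidean edge length), and let e = {u, v} be an edge of T of maximum length. Then: (1) u and v do not belong to the same cluster X_i; and (2) every cluster X_i is entirely contained in one of the two connected components of T with the edge e removed. -/
open scoped Classical in
/-- The total Euclidean edge length of a graph `G` on the points `p 0, …, p (n-1)`. -/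
noncomputable def treeCost {n d : ℕ} (p : Fin n → EuclideanSpace ℝ (Fin d))
    (G : SimpleGraph (Fin n)) : ℝ :=
  ∑ e ∈ G.edgeFinset,
    Sym2.lift ⟨fun a b => dist (p a) (p b), fun a b => dist_comm (p a) (p b)⟩ e

/-!
For `α ≥ 2 + √3`, center proximity makes every point strictly closer to each point of its own
cluster than to any point of another cluster; this is exactly where `α² - 4α + 1 ≥ 0` enters.
On the other side, a minimum spanning tree has the cut property: deleting a tree edge `xy` and
reconnecting the two sides by any pair `ab` gives another spanning tree, so `|xy| ≤ |ab|`, and in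
particular no edge on the tree path from `a` to `b` is longer than `|ab|`. Hence the tree path
between two points of a cluster never leaves it, which gives (2) once (1) is known. For (1), if
the longest edge `uv` lay inside a cluster, the first tree edge `xy` leaving that cluster would
satisfy `|xy| ≤ |uv| ≤ |xz|`, where `z ∈ {u, v}` lies on the other side of the cut of `uv` from
`x`, contradicting the geometric fact.
-/

open SimpleGraph

section CenterProximity

variable {ι κ E : Type*} [PseudoMetricSpace E]

def CenterProximity (α : ℝ) (p : ι → E) (σ : ι → κ) (c : κ → E) : Prop :=
  ∀ a j, j ≠ σ a → α * dist (p a) (c (σ a)) < dist (p a) (c j)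

variable {α : ℝ} {p : ι → E} {σ : ι → κ} {c : κ → E}

theorem CenterProximity.sub_one_mul_dist_center_lt_dist (h : CenterProximity α p σ c)
    (hα : 0 < α) {a b : ι} (hab : σ a ≠ σ b) :
    (α - 1) * dist (p a) (c (σ a)) < dist (p a) (p b) := by
  have ha := h a (σ b) hab.symm
  have hb := h b (σ a) hab
  have ta := dist_triangle (p a) (p b) (c (σ b))
  have tb := dist_triangle (p b) (p a) (c (σ a))
  rw [dist_comm (p b) (p a)] at tb
  nlinarith [mul_lt_mul_of_pos_left (ha.trans_le ta) hα]

theorem CenterProximity.dist_lt_dist (h : CenterProximity α p σ c) (hα : 2 + √3 ≤ α)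
    {x y z : ι} (hz : σ z = σ x) (hy : σ y ≠ σ x) :
    dist (p x) (p z) < dist (p x) (p y) := by
  have hα2 : 2 ≤ α := by linarith [Real.sqrt_nonneg 3]
  have hα0 : 0 < α := by linarith
  have hquad : 0 ≤ α ^ 2 - 4 * α + 1 := by
    nlinarith [Real.sq_sqrt (show (0 : ℝ) ≤ 3 by norm_num), Real.sqrt_nonneg 3]
  have hx := h.sub_one_mul_dist_center_lt_dist hα0 hy.symm
  have hy' := h.sub_one_mul_dist_center_lt_dist hα0 hy
  rw [dist_comm (p y) (p x)] at hy'
  have hzc := h z (σ y) (hz ▸ hy)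
  rw [hz] at hzc
  have t1 := dist_triangle (p z) (c (σ x)) (c (σ y))
  have t2 := dist_triangle4 (c (σ x)) (p x) (p y) (c (σ y))
  have t3 := dist_triangle (p x) (c (σ x)) (p z)
  rw [dist_comm (c (σ x)) (p x)] at t2
  rw [dist_comm (c (σ x)) (p z)] at t3
  by_contra! hle
  -- `(α - 1) (|xy| - |x c_x|) ≤ (α - 1) |z c_x| < |c_x c_y| ≤ |x c_x| + |xy| + |y c_y|`
  have hcross : (α - 2) * dist (p x) (p y) < α * dist (p x) (c (σ x)) + dist (p y) (c (σ y)) := by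
    nlinarith [mul_le_mul_of_nonneg_left (show dist (p x) (p y) - dist (p x) (c (σ x)) ≤
      dist (p z) (c (σ x)) by linarith) (show 0 ≤ α - 1 by linarith)]
  -- multiplied by `α - 1`, and with the bounds `hx`, `hy'`, this reads `(α² - 4α + 1) |xy| < 0`
  nlinarith [mul_lt_mul_of_pos_left hcross (show 0 < α - 1 by linarith),
    mul_lt_mul_of_pos_left hx hα0, mul_nonneg hquad (dist_nonneg (x := p x) (y := p y))]

end CenterProximity

namespace SimpleGraph

variable {V : Type*} {G : SimpleGraph V}

theorem IsAcyclic.not_reachable_deleteEdges_of_mem_edges (hG : G.IsAcyclic) {a b x y : V}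
    {P : G.Walk a b} (hP : P.IsPath) (he : s(x, y) ∈ P.edges) :
    ¬(G.deleteEdges {s(x, y)}).Reachable a b := by
  classical
  rw [reachable_deleteEdges_iff_exists_walk]
  rintro ⟨Q, hQ⟩
  have hQP : (⟨Q.bypass, Q.bypass_isPath⟩ : G.Path a b) = ⟨P, hP⟩ :=
    (hG.subsingleton_path a b).elim _ _
  have hbypass : Q.bypass = P := congrArg Subtype.val hQP
  exact hQ (Q.edges_bypass_subset_edges (hbypass ▸ he))

theorem Reachable.deleteEdges_or {w x : V} (h : G.Reachable w x) (y : V) :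
    (G.deleteEdges {s(x, y)}).Reachable w x ∨ (G.deleteEdges {s(x, y)}).Reachable w y := by
  obtain ⟨W⟩ := h
  induction W with
  | nil => exact .inl .rfl
  | @cons w w' x hadj _ ih =>
    by_cases he : s(w, w') = s(x, y)
    · rcases Sym2.eq_iff.mp he with ⟨rfl, -⟩ | ⟨rfl, -⟩
      · exact .inl .rfl
      · exact .inr .rfl
    · have hadj' : (G.deleteEdges {s(x, y)}).Adj w w' := by simpa [he] using hadj
      exact ih.imp hadj'.reachable.trans hadj'.reachable.trans

theorem IsTree.deleteEdges_sup_edge {T : SimpleGraph V} (hT : T.IsTree) {x y a b : V}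
    (hab : ¬(T.deleteEdges {s(x, y)}).Reachable a b) :
    (T.deleteEdges {s(x, y)} ⊔ edge a b).IsTree := by
  set H := T.deleteEdges {s(x, y)}
  have hHle : H ≤ H ⊔ edge a b := le_sup_left
  have hne : a ≠ b := fun h => hab (h ▸ .rfl)
  have hab' : (H ⊔ edge a b).Reachable a b := Adj.reachable (by simp [edge_adj, hne])
  have hxy : (H ⊔ edge a b).Reachable x y := by
    rcases (hT.connected.preconnected a x).deleteEdges_or y with ha | ha <;>
    rcases (hT.connected.preconnected b x).deleteEdges_or y with hb | hb
    · exact absurd (ha.trans hb.symm) hab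
    · exact (ha.mono hHle).symm.trans (hab'.trans (hb.mono hHle))
    · exact (hb.mono hHle).symm.trans (hab'.symm.trans (ha.mono hHle))
    · exact absurd (ha.trans hb.symm) hab
  refine ⟨(connected_iff _).mpr ⟨fun v w => ?_, ⟨x⟩⟩, ?_⟩
  · have hto : ∀ w, (H ⊔ edge a b).Reachable w x := fun w =>
      ((hT.connected.preconnected w x).deleteEdges_or y).elim (·.mono hHle)
        (fun h => (h.mono hHle).trans hxy.symm)
    exact (hto v).trans (hto w).symm
  · exact (hT.isAcyclic.anti (T.deleteEdges_le _)).sup_edge_of_not_reachable hab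

end SimpleGraph

section EuclideanMST

variable {n d : ℕ}

theorem treeCost_eq_sum_of_edgeSet_eq (p : Fin n → EuclideanSpace ℝ (Fin d))
    {G : SimpleGraph (Fin n)} {s : Finset (Sym2 (Fin n))} (hs : G.edgeSet = s) :
    treeCost p G =
      ∑ e ∈ s, Sym2.lift ⟨fun a b => dist (p a) (p b), fun a b => dist_comm (p a) (p b)⟩ e := by
  classical
  unfold treeCost
  congr 1
  exact Finset.coe_injective (by rw [coe_edgeFinset, hs])

theorem treeCost_deleteEdges_sup_edge (p : Fin n → EuclideanSpace ℝ (Fin d))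
    {T : SimpleGraph (Fin n)} {x y a b : Fin n} (hxy : T.Adj x y) (hne : a ≠ b)
    (hab : ¬(T.deleteEdges {s(x, y)}).Adj a b) :
    treeCost p (T.deleteEdges {s(x, y)} ⊔ edge a b) =
      treeCost p T - dist (p x) (p y) + dist (p a) (p b) := by
  classical
  have hnot : s(a, b) ∉ T.edgeFinset.erase s(x, y) := by simpa [and_comm] using hab
  rw [treeCost_eq_sum_of_edgeSet_eq p (s := insert s(a, b) (T.edgeFinset.erase s(x, y))),
    treeCost_eq_sum_of_edgeSet_eq p (coe_edgeFinset T).symm, Finset.sum_insert hnot,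
    Finset.sum_erase_eq_sub (by simpa using hxy)]
  · simp only [Sym2.lift_mk]
    ring
  · ext e
    simp [edgeSet_deleteEdges, edgeSet_edge_of_ne hne, and_comm]

def IsEuclideanMST (p : Fin n → EuclideanSpace ℝ (Fin d)) (T : SimpleGraph (Fin n)) : Prop :=
  T.IsTree ∧ ∀ G : SimpleGraph (Fin n), G.IsTree → treeCost p T ≤ treeCost p G

namespace IsEuclideanMST

variable {p : Fin n → EuclideanSpace ℝ (Fin d)} {T : SimpleGraph (Fin n)}

theorem dist_le_of_not_reachable_deleteEdges (hT : IsEuclideanMST p T) {x y a b : Fin n}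
    (hxy : T.Adj x y) (hab : ¬(T.deleteEdges {s(x, y)}).Reachable a b) :
    dist (p x) (p y) ≤ dist (p a) (p b) := by
  have hcost := hT.2 _ (hT.1.deleteEdges_sup_edge hab)
  rw [treeCost_deleteEdges_sup_edge p hxy (by rintro rfl; exact hab .rfl) (hab ·.reachable)]
    at hcost
  linarith

theorem dist_le_of_mem_edges (hT : IsEuclideanMST p T) {a b x y : Fin n} {P : T.Walk a b}
    (hP : P.IsPath) (he : s(x, y) ∈ P.edges) : dist (p x) (p y) ≤ dist (p a) (p b) :=
  hT.dist_le_of_not_reachable_deleteEdges (P.adj_of_mem_edges he)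
    (hT.1.isAcyclic.not_reachable_deleteEdges_of_mem_edges hP he)

variable {k : ℕ} {σ : Fin n → Fin k} {c : Fin k → EuclideanSpace ℝ (Fin d)} {α : ℝ}

theorem cluster_eq_of_mem_support (hT : IsEuclideanMST p T)
    (hprox : CenterProximity α p σ c) (hα : 2 + √3 ≤ α) {a b : Fin n} (P : T.Walk a b)
    (hP : P.IsPath) (hab : σ a = σ b) : ∀ z ∈ P.support, σ z = σ a := by
  induction P with
  | nil => simp
  | @cons a a' b hadj P ih =>
    have ha' : σ a' = σ a := by
      by_contra hne
      have hle := hT.dist_le_of_mem_edges hP (by simp : s(a, a') ∈ (Walk.cons hadj P).edges)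
      exact (hprox.dist_lt_dist hα hab.symm hne).not_ge hle
    exact List.forall_mem_cons.mpr
      ⟨rfl, fun z hz => (ih hP.of_cons (ha'.trans hab) z hz).trans ha'⟩

theorem cluster_ne_of_longest_edge (hT : IsEuclideanMST p T)
    (hprox : CenterProximity α p σ c) (hα : 2 + √3 ≤ α) {u v w : Fin n} (huv : T.Adj u v)
    (hmax : ∀ a b, T.Adj a b → dist (p a) (p b) ≤ dist (p u) (p v)) (hw : σ w ≠ σ u) :
    σ u ≠ σ v := by
  intro hσ
  obtain ⟨W⟩ := hT.1.connected.preconnected u w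
  obtain ⟨e, -, hx, hy⟩ : ∃ e ∈ W.darts, σ e.fst = σ u ∧ σ e.snd ≠ σ u :=
    W.exists_boundary_dart {z | σ z = σ u} rfl hw
  have hbridge : ¬(T.deleteEdges {s(u, v)}).Reachable u v :=
    hT.1.isAcyclic.not_reachable_deleteEdges_of_mem_edges (Path.singleton huv).2 (by simp)
  obtain ⟨z, hz, hsep⟩ : ∃ z, σ z = σ u ∧ ¬(T.deleteEdges {s(u, v)}).Reachable z e.fst := by
    by_contra! h
    exact hbridge ((h u rfl).trans (h v hσ.symm).symm)
  have hle := calc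
    dist (p e.fst) (p e.snd) ≤ dist (p u) (p v) := hmax _ _ e.adj
    _ ≤ dist (p z) (p e.fst) := hT.dist_le_of_not_reachable_deleteEdges huv hsep
    _ = dist (p e.fst) (p z) := dist_comm _ _
  exact (hprox.dist_lt_dist hα (hz.trans hx.symm) (fun h => hy (h.trans hx))).not_ge hle

end IsEuclideanMST

end EuclideanMST

theorem mst_longest_edge_separates_clusters_general {n d k : ℕ} (hk : 2 ≤ k)
    (p : Fin n → EuclideanSpace ℝ (Fin d))
    (σ : Fin n → Fin k) (hsurj : Function.Surjective σ)
    (c : Fin k → EuclideanSpace ℝ (Fin d))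
    (α : ℝ) (hα : 2 + Real.sqrt 3 ≤ α)
    (hprox : ∀ a : Fin n, ∀ j : Fin k, j ≠ σ a →
      α * dist (p a) (c (σ a)) < dist (p a) (c j))
    (T : SimpleGraph (Fin n)) (hT : T.IsTree)
    (hmin : ∀ G : SimpleGraph (Fin n), G.IsTree → treeCost p T ≤ treeCost p G)
    (u v : Fin n) (huv : T.Adj u v)
    (hmax : ∀ a b : Fin n, T.Adj a b → dist (p a) (p b) ≤ dist (p u) (p v)) :
    σ u ≠ σ v ∧
    (∀ i : Fin k, ∀ a b : Fin n, σ a = i → σ b = i →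
      (T.deleteEdges {s(u, v)}).Reachable a b) := by
  have hMST : IsEuclideanMST p T := ⟨hT, hmin⟩
  obtain ⟨j, hj⟩ := Fintype.exists_ne_of_one_lt_card (by rw [Fintype.card_fin]; omega) (σ u)
  obtain ⟨w, rfl⟩ := hsurj j
  have hsep : σ u ≠ σ v := hMST.cluster_ne_of_longest_edge hprox hα huv hmax hj
  refine ⟨hsep, fun i a b ha hb => ?_⟩
  obtain ⟨P, hP⟩ := hT.connected.exists_isPath a b
  have hcl := hMST.cluster_eq_of_mem_support hprox hα P hP (ha.trans hb.symm)
  rw [reachable_deleteEdges_iff_exists_walk]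
  exact ⟨P, fun he => hsep ((hcl u (P.fst_mem_support_of_mem_edges he)).trans
    (hcl v (P.snd_mem_support_of_mem_edges he)).symm)⟩

/-- Let `X = {p 0, …, p (n−1)}` (`n ≥ 2` distinct points in `ℝ^d`) be
partitioned into `k ≥ 2` nonempty clusters via the assignment `σ`, with centers `c`
satisfying `α`-center proximity for `α ≥ 2 + √3`. Let `T` be a Euclidean minimum spanning
tree of the points and let `{u, v}` be a longest edge of `T`. Then `u` and `v` lie in
different clusters, and each cluster is contained in a single connected component of
`T` minus the edge `{u, v}`. -/
theorem mst_longest_edge_separates_clusters {n d k : ℕ} (hn : 2 ≤ n) (hk : 2 ≤ k)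
    (p : Fin n → EuclideanSpace ℝ (Fin d)) (hinj : Function.Injective p)
    (σ : Fin n → Fin k) (hsurj : Function.Surjective σ)
    (c : Fin k → EuclideanSpace ℝ (Fin d))
    (α : ℝ) (hα : 2 + Real.sqrt 3 ≤ α)
    (hprox : ∀ a : Fin n, ∀ j : Fin k, j ≠ σ a →
      α * dist (p a) (c (σ a)) < dist (p a) (c j))
    (T : SimpleGraph (Fin n)) (hT : T.IsTree)
    (hmin : ∀ G : SimpleGraph (Fin n), G.IsTree → treeCost p T ≤ treeCost p G)
    (u v : Fin n) (huv : T.Adj u v)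
    (hmax : ∀ a b : Fin n, T.Adj a b → dist (p a) (p b) ≤ dist (p u) (p v)) :
    σ u ≠ σ v ∧
    (∀ i : Fin k, ∀ a b : Fin n, σ a = i → σ b = i →
      (T.deleteEdges {s(u, v)}).Reachable a b) :=
  mst_longest_edge_separates_clusters_general hk p σ hsurj c α hα hprox T hT hmin u v huv hmax
end

section
/- Let δ be a metric on a finite set X and let S, O ⊆ X be center sets of size k with unique nearest assignments, where O minimizes the k-median cost. Then there exists a set 𝒮 ⊆ S × O of k candidate swaps such that every center of O occurs as the second coordinate of exactly one pair of 𝒮 and every center of S occurs as the first coordinate of at most two pairs, and, writing δ′_{(i,j)}(p) = min_{c ∈ (S∖{i})∪{j}} δ(p, c): (a) for every p ∈ X10 ∪ X11, Σ_{(i,j)∈𝒮} (δ(p) − δ′_{(i,j)}(p)) ≥ δ(p) − δ*(p); (b) for every p ∈ X01 and every (i,j) ∈ 𝒮, δ′_{(i,j)}(p) ≤ δ*(p); and (c) for every p ∈ X00, Σ_{(i,j)∈𝒮} (δ(p) − δ′_{(i,j)}(p)) ≥ δ(p) − 5·δ*(p). -/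
/-- The distance from `p` to its nearest center after the 1-swap replacing `i ∈ S`
by `j`: `δ′_{(i,j)}(p) = min_{c ∈ (S∖{i})∪{j}} δ(p, c)`. -/
noncomputable def swapDist {X : Type*} [DecidableEq X] (δ : X → X → ℝ)
    (S : Finset X) (i j p : X) : ℝ :=
  sInf (δ p '' ((insert j (S.erase i) : Finset X) : Set X))

/-!
Every center of `O ∩ S` is swapped with itself, so it survives every swap; this gives (a) and
(b). The centers of `O \ S` are paired with centers of `S \ O`, at most two per center, in such
a way that the center paired with `j` is never `nn(j₀)` for another `j₀ ∈ O \ S`; a counting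
argument shows that this is possible. For `p ∈ X00` the swap bringing in `nn*(p)` gains
`δ(p) - δ*(p)`, and each of the at most two other swaps removing `nn(p)` can reroute `p` to
`nn(nn*(p))`, losing at most `2 δ*(p)`.
-/
open Finset

section Graph

variable {α β : Type*} [DecidableEq α] [DecidableEq β]

theorem Finset.card_image_graph (O : Finset α) (F : α → β) :
    #(O.image fun j => (F j, j)) = #O :=
  card_image_of_injective _ fun _ _ h => congrArg Prod.snd h

theorem Finset.card_filter_snd_image_graph {O : Finset α} (F : α → β) {j : α} (hj : j ∈ O) :
    #{e ∈ O.image (fun j => (F j, j)) | e.2 = j} = 1 := by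
  rw [card_eq_one]
  refine ⟨(F j, j), eq_singleton_iff_unique_mem.2 ⟨mem_filter.2 ⟨mem_image_of_mem _ hj, rfl⟩, ?_⟩⟩
  rintro e he
  obtain ⟨⟨o, -, rfl⟩, rfl⟩ := (mem_filter.1 he).imp_left mem_image.1
  rfl

theorem Finset.card_filter_fst_image_graph (O : Finset α) (F : α → β) (i : β) :
    #{e ∈ O.image (fun j => (F j, j)) | e.1 = i} = #{j ∈ O | F j = i} := by
  rw [filter_image, card_image_of_injective _ fun _ _ h => congrArg Prod.snd h]

theorem Finset.sum_image_graph {M : Type*} [AddCommMonoid M] (O : Finset α) (F : α → β)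
    (φ : β × α → M) : ∑ e ∈ O.image (fun j => (F j, j)), φ e = ∑ j ∈ O, φ (F j, j) :=
  sum_image fun _ _ _ _ h => congrArg Prod.snd h

end Graph

section Assignment

variable {α : Type*} [DecidableEq α]

theorem Finset.exists_mapsTo_card_filter_le (P Q : Finset α) (n : ℕ) (hPQ : #P ≤ n * #Q) :
    ∃ h : α → α, Set.MapsTo h P Q ∧ ∀ q, #{p ∈ P | h p = q} ≤ n := by
  rcases P.eq_empty_or_nonempty with rfl | ⟨a, -⟩
  · exact ⟨id, by simp [Set.MapsTo], by simp⟩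
  have : Nonempty α := ⟨a⟩
  have hcard : (P : Set α).encard ≤ (↑(Q ×ˢ range n) : Set (α × ℕ)).encard := by
    rw [Set.encard_coe_eq_coe_finsetCard, Set.encard_coe_eq_coe_finsetCard, card_product,
      card_range, mul_comm]
    exact_mod_cast hPQ
  obtain ⟨e, he, he_inj⟩ := (P : Set α).toFinite.exists_injOn_of_encard_le hcard
  refine ⟨fun p => (e p).1, fun p hp => (mem_product.1 (he hp)).1, fun q => ?_⟩
  calc #{p ∈ P | (e p).1 = q}
      ≤ #(range n) := card_le_card_of_injOn (fun p => (e p).2)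
        (fun p hp => (mem_product.1 (he (mem_filter.1 hp).1)).2) fun p hp p' hp' h => by
          simp only [coe_filter, Set.mem_ofPred_eq] at hp hp'
          exact he_inj hp.1 hp'.1 (Prod.ext (hp.2.trans hp'.2.symm) h)
    _ = n := card_range n

theorem exists_mapsTo_notMem_image_erase (I J : Finset α) (hJI : #J ≤ #I) (g : α → α) :
    ∃ f : α → α, Set.MapsTo f J I ∧ (∀ j ∈ J, f j ∉ (J.erase j).image g) ∧
      ∀ i, #{j ∈ J | f j = i} ≤ 2 := by
  -- `j ∈ B` keeps `g j`, hit by no other element of `J`; the rest of `J` goes, two per center,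
  -- to `A`, and there is room: the other centers of `g '' J ∩ I` are each hit twice by `R`
  set B := {j ∈ J | g j ∈ I ∧ ∀ o ∈ J, g o = g j → o = j}
  set A := I \ J.image g
  set R := {j ∈ J \ B | g j ∈ I}
  have hBJ : B ⊆ J := filter_subset _ _
  have hB_inj : ∀ j ∈ B, ∀ o ∈ J, g o = g j → o = j := fun j hj => (mem_filter.1 hj).2.2
  have hR_fiber : ∀ i ∈ R.image g, 2 ≤ #{j ∈ R | g j = i} := by
    intro i hi
    obtain ⟨j, hjR, rfl⟩ := mem_image.1 hi
    obtain ⟨⟨hjJ, hjB⟩, hjI⟩ := mem_filter.1 hjR |>.imp_left mem_sdiff.1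
    obtain ⟨o, hoJ, hgo, hoj⟩ : ∃ o ∈ J, g o = g j ∧ o ≠ j := by
      by_contra! h
      exact hjB (mem_filter.2 ⟨hjJ, hjI, fun o ho hgo => h o ho hgo⟩)
    have hoB : o ∉ B := fun hoB => hoj (hB_inj o hoB j hjJ hgo.symm).symm
    exact one_lt_card.2 ⟨j, mem_filter.2 ⟨hjR, rfl⟩, o,
      mem_filter.2 ⟨mem_filter.2 ⟨mem_sdiff.2 ⟨hoJ, hoB⟩, hgo ▸ hjI⟩, hgo⟩, hoj.symm⟩
  have hI_cover : I ⊆ A ∪ B.image g ∪ R.image g := by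
    intro i hi
    by_cases hiJ : i ∈ J.image g
    · obtain ⟨j, hjJ, rfl⟩ := mem_image.1 hiJ
      by_cases hjB : j ∈ B
      · exact mem_union_left _ (mem_union_right _ (mem_image_of_mem g hjB))
      · exact mem_union_right _ (mem_image_of_mem g (mem_filter.2 ⟨mem_sdiff.2 ⟨hjJ, hjB⟩, hi⟩))
    · exact mem_union_left _ (mem_union_left _ (mem_sdiff.2 ⟨hi, hiJ⟩))
  have hrest : #(J \ B) ≤ 2 * #A := by
    have h₁ := (card_le_card hI_cover).trans <| (card_union_le _ _).trans <|
      add_le_add (card_union_le _ _) le_rfl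
    have h₂ := mul_card_image_le_card R 2 hR_fiber
    have h₃ : #R ≤ #(J \ B) := card_le_card (filter_subset _ _)
    have h₄ : #(B.image g) ≤ #B := card_image_le
    have h₅ : #(J \ B) + #B = #J := card_sdiff_add_card_eq_card hBJ
    omega
  obtain ⟨h, hhA, hh_fiber⟩ := exists_mapsTo_card_filter_le (J \ B) A 2 hrest
  have hA_notMem : ∀ j ∈ J, g j ∉ A := fun j hj hA =>
    (mem_sdiff.1 hA).2 (mem_image_of_mem g hj)
  refine ⟨fun j => if j ∈ B then g j else h j, fun j hj => ?_, fun j hj => ?_, fun i => ?_⟩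
  · by_cases hjB : j ∈ B
    · simpa [hjB] using (mem_filter.1 hjB).2.1
    · simpa [hjB] using (mem_sdiff.1 (hhA (mem_sdiff.2 ⟨hj, hjB⟩))).1
  · by_cases hjB : j ∈ B
    · simp only [hjB, if_true, mem_image, mem_erase, not_exists, not_and, and_imp]
      exact fun o hoj hoJ hgo => hoj (hB_inj j hjB o hoJ hgo)
    · simp only [hjB, if_false]
      exact fun hmem => (mem_sdiff.1 (hhA (mem_sdiff.2 ⟨hj, hjB⟩))).2
        (image_subset_image (erase_subset j J) hmem)
  · by_cases hiA : i ∈ A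
    · refine (card_le_card fun j hj => ?_).trans (hh_fiber i)
      obtain ⟨hjJ, hji⟩ := mem_filter.1 hj
      by_cases hjB : j ∈ B
      · simp only [hjB, if_true] at hji
        exact absurd (hji ▸ hiA) (hA_notMem j hjJ)
      · simp only [hjB, if_false] at hji
        exact mem_filter.2 ⟨mem_sdiff.2 ⟨hjJ, hjB⟩, hji⟩
    · refine (card_le_one.2 fun j hj o ho => ?_).trans one_le_two
      obtain ⟨hjJ, hji⟩ := mem_filter.1 hj
      obtain ⟨hoJ, hoi⟩ := mem_filter.1 ho
      have hB : ∀ x ∈ J, (if x ∈ B then g x else h x) = i → x ∈ B := fun x hx hxi => by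
        by_contra hxB
        simp only [hxB, if_false] at hxi
        exact hiA (hxi ▸ hhA (mem_sdiff.2 ⟨hx, hxB⟩))
      have hjB := hB j hjJ hji
      have hoB := hB o hoJ hoi
      simp only [hjB, hoB, if_true] at hji hoi
      exact (hB_inj j hjB o hoJ (hoi.trans hji.symm)).symm

end Assignment

theorem IsMetric.le_two_mul_add_of_forall_le {α : Type*} {δ : α → α → ℝ} (hδ : IsMetric δ)
    {S : Finset α} {p q c s : α} (hc : ∀ c' ∈ S, δ q c ≤ δ q c') (hs : s ∈ S) :
    δ p c ≤ 2 * δ p q + δ p s := by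
  obtain ⟨-, -, -, hsymm, htri⟩ := hδ
  have := hc s hs
  linarith [htri p q c, htri q p s, hsymm q p]

section Swaps

variable {α : Type*} [DecidableEq α]

theorem exists_swap_pairing (S O : Finset α) (hOS : #O ≤ #S) (g : α → α) :
    ∃ F : α → α, (∀ j ∈ S, F j = j) ∧ Set.MapsTo F ↑(O \ S) ↑(S \ O) ∧
      (∀ j ∈ O \ S, F j ∉ ((O \ S).erase j).image g) ∧ ∀ i, #{j ∈ O | F j = i} ≤ 2 := by
  obtain ⟨f, hf_maps, hf_avoid, hf_fiber⟩ :=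
    exists_mapsTo_notMem_image_erase (S \ O) (O \ S) (card_sdiff_le_card_sdiff_iff.2 hOS) g
  refine ⟨fun j => if j ∈ S then j else f j, fun j hj => if_pos hj, fun j hj => ?_,
    fun j hj => ?_, fun i => ?_⟩
  · simpa only [(mem_sdiff.1 hj).2, if_false] using hf_maps hj
  · simpa only [(mem_sdiff.1 hj).2, if_false] using hf_avoid j hj
  by_cases hiO : i ∈ O
  · refine (card_le_one.2 fun j hj o ho => ?_).trans one_le_two
    have hfix : ∀ x ∈ O, (if x ∈ S then x else f x) = i → x = i := fun x hx hxi => by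
      by_cases hxS : x ∈ S
      · rwa [if_pos hxS] at hxi
      · rw [if_neg hxS] at hxi
        exact absurd (hxi ▸ hiO) (mem_sdiff.1 (hf_maps (mem_sdiff.2 ⟨hx, hxS⟩))).2
    exact (hfix j (mem_filter.1 hj).1 (mem_filter.1 hj).2).trans
      (hfix o (mem_filter.1 ho).1 (mem_filter.1 ho).2).symm
  · refine (card_le_card fun j hj => ?_).trans (hf_fiber i)
    obtain ⟨hjO, hji⟩ := mem_filter.1 hj
    by_cases hjS : j ∈ S
    · simp only [hjS, if_true] at hji
      exact absurd (hji ▸ hjO) hiO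
    · simp only [hjS, if_false] at hji
      exact mem_filter.2 ⟨mem_sdiff.2 ⟨hjO, hjS⟩, hji⟩

theorem swapDist_le_of_mem {δ : α → α → ℝ} {S : Finset α} {i j p c : α}
    (hc : c ∈ insert j (S.erase i)) : swapDist δ S i j p ≤ δ p c :=
  csInf_le ((Set.toFinite _).image _).bddBelow ⟨c, hc, rfl⟩

theorem swapDist_le_right (δ : α → α → ℝ) (S : Finset α) (i j p : α) :
    swapDist δ S i j p ≤ δ p j :=
  swapDist_le_of_mem (mem_insert_self j _)

variable {S O : Finset α} {F : α → α}

theorem mem_insert_erase_of_mem_inter (hF_fix : ∀ j ∈ S, F j = j)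
    (hF_maps : Set.MapsTo F ↑(O \ S) ↑(S \ O)) {j c : α} (hj : j ∈ O) (hc : c ∈ S ∩ O) :
    c ∈ insert j (S.erase (F j)) := by
  obtain ⟨hcS, hcO⟩ := mem_inter.1 hc
  by_cases hjS : j ∈ S
  · rwa [hF_fix j hjS, insert_erase hjS]
  · have hFj : F j ∉ O := (mem_sdiff.1 (hF_maps (mem_sdiff.2 ⟨hj, hjS⟩))).2
    exact mem_insert_of_mem (mem_erase.2 ⟨fun h => hFj (h ▸ hcO), hcS⟩)

theorem swapDist_le_of_mem_inter (δ : α → α → ℝ) (hF_fix : ∀ j ∈ S, F j = j)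
    (hF_maps : Set.MapsTo F ↑(O \ S) ↑(S \ O)) {j c : α} (p : α) (hj : j ∈ O)
    (hc : c ∈ S ∩ O) : swapDist δ S (F j) j p ≤ δ p c :=
  swapDist_le_of_mem (mem_insert_erase_of_mem_inter hF_fix hF_maps hj hc)

theorem sub_le_sum_swapGain_of_mem_inter (δ : α → α → ℝ) (hF_fix : ∀ j ∈ S, F j = j)
    (hF_maps : Set.MapsTo F ↑(O \ S) ↑(S \ O)) {c j₀ : α} (p : α) (hc : c ∈ S ∩ O)
    (hj₀ : j₀ ∈ O) :
    δ p c - δ p j₀ ≤ ∑ j ∈ O, (δ p c - swapDist δ S (F j) j p) := by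
  have hgain : ∀ j ∈ O, 0 ≤ δ p c - swapDist δ S (F j) j p := fun j hj =>
    sub_nonneg.2 (swapDist_le_of_mem_inter δ hF_fix hF_maps p hj hc)
  calc δ p c - δ p j₀ ≤ δ p c - swapDist δ S (F j₀) j₀ p :=
        sub_le_sub_left (swapDist_le_right δ S _ _ p) _
    _ ≤ _ := single_le_sum hgain hj₀

theorem sub_five_mul_le_sum_swapGain {δ : α → α → ℝ} (hδ : IsMetric δ) {nn : α → α}
    (hnn : ∀ q, nn q ∈ S ∧ ∀ c ∈ S, δ q (nn q) ≤ δ q c) (hF_fix : ∀ j ∈ S, F j = j)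
    (hF_avoid : ∀ j ∈ O \ S, F j ∉ ((O \ S).erase j).image nn)
    (hF_fiber : ∀ i, #{j ∈ O | F j = i} ≤ 2) {p j₀ : α} (hp : nn p ∈ S \ O)
    (hj₀ : j₀ ∈ O \ S) :
    δ p (nn p) - 5 * δ p j₀ ≤ ∑ j ∈ O, (δ p (nn p) - swapDist δ S (F j) j p) := by
  set d := δ p j₀
  have hd : 0 ≤ d := hδ.1 p j₀
  have hstay : ∀ j ∈ O, F j ≠ nn p → swapDist δ S (F j) j p ≤ δ p (nn p) := fun j _ hj =>
    swapDist_le_of_mem (mem_insert_of_mem (mem_erase.2 ⟨hj.symm, (hnn p).1⟩))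
  have hreroute : ∀ j ∈ O, F j = nn p → j ≠ j₀ →
      swapDist δ S (F j) j p ≤ 2 * d + δ p (nn p) := fun j hj hFj hjj₀ => by
    have hjS : j ∉ S := fun hjS => (mem_sdiff.1 hp).2 (hFj ▸ (hF_fix j hjS).symm ▸ hj)
    have hne : nn j₀ ≠ F j := fun h => hF_avoid j (mem_sdiff.2 ⟨hj, hjS⟩)
      (h ▸ mem_image_of_mem nn (mem_erase.2 ⟨hjj₀.symm, hj₀⟩))
    exact (swapDist_le_of_mem (mem_insert_of_mem (mem_erase.2 ⟨hne, (hnn j₀).1⟩))).trans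
      (hδ.le_two_mul_add_of_forall_le (hnn j₀).2 (hnn p).1)
  -- crediting `2 d` to each swap that removes `nn p` makes every term nonnegative
  have hbonus : ∀ j ∈ O,
      0 ≤ δ p (nn p) - swapDist δ S (F j) j p + if F j = nn p then 2 * d else 0 := by
    intro j hj
    split_ifs with hFj
    · rcases eq_or_ne j j₀ with rfl | hjj₀
      · linarith [swapDist_le_right δ S (F j) j p, hδ.1 p (nn p)]
      · linarith [hreroute j hj hFj hjj₀]
    · linarith [hstay j hj hFj]
  have hsingle := single_le_sum hbonus (mem_sdiff.1 hj₀).1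
  rw [sum_add_distrib, ← sum_filter, sum_const, nsmul_eq_mul] at hsingle
  have hcount : (#{j ∈ O | F j = nn p} : ℝ) ≤ 2 := by exact_mod_cast hF_fiber (nn p)
  have hgain₀ := swapDist_le_right δ S (F j₀) j₀ p
  split_ifs at hsingle <;> nlinarith

end Swaps

theorem candidate_swaps_exist_general {X : Type*} [DecidableEq X]
    (δ : X → X → ℝ) (hmetric : IsMetric δ) (k : ℕ)
    (S O : Finset X) (hScard : S.card = k) (hOcard : O.card = k)
    (nnS nnO : X → X)
    (hnnS : ∀ p, nnS p ∈ S ∧ ∀ c ∈ S, δ p (nnS p) ≤ δ p c)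
    (hnnO : ∀ p, nnO p ∈ O ∧ ∀ c ∈ O, δ p (nnO p) ≤ δ p c) :
    ∃ 𝒮 : Finset (X × X), 𝒮 ⊆ S ×ˢ O ∧ 𝒮.card = k ∧
      (∀ j ∈ O, (𝒮.filter (fun e => e.2 = j)).card = 1) ∧
      (∀ i ∈ S, (𝒮.filter (fun e => e.1 = i)).card ≤ 2) ∧
      (∀ p : X, nnS p ∈ S ∩ O →
        δ p (nnS p) - δ p (nnO p) ≤
          ∑ e ∈ 𝒮, (δ p (nnS p) - swapDist δ S e.1 e.2 p)) ∧
      (∀ p : X, nnS p ∈ S \ O → nnO p ∈ S ∩ O →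
        ∀ e ∈ 𝒮, swapDist δ S e.1 e.2 p ≤ δ p (nnO p)) ∧
      (∀ p : X, nnS p ∈ S \ O → nnO p ∈ O \ S →
        δ p (nnS p) - 5 * δ p (nnO p) ≤
          ∑ e ∈ 𝒮, (δ p (nnS p) - swapDist δ S e.1 e.2 p)) := by
  obtain ⟨F, hF_fix, hF_maps, hF_avoid, hF_fiber⟩ :=
    exists_swap_pairing S O (by rw [hScard, hOcard]) nnS
  have hF_mem : ∀ j ∈ O, F j ∈ S := fun j hj => by
    by_cases hjS : j ∈ S
    · rwa [hF_fix j hjS]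
    · exact (mem_sdiff.1 (hF_maps (mem_sdiff.2 ⟨hj, hjS⟩))).1
  refine ⟨O.image fun j => (F j, j), ?_, (card_image_graph O F).trans hOcard,
    fun j hj => card_filter_snd_image_graph F hj,
    fun i _ => (card_filter_fst_image_graph O F i).trans_le (hF_fiber i),
    fun p hp => ?_, fun p _ hp => ?_, fun p hp hp' => ?_⟩
  · intro e he
    obtain ⟨j, hj, rfl⟩ := mem_image.1 he
    exact mem_product.2 ⟨hF_mem j hj, hj⟩
  · rw [sum_image_graph]
    exact sub_le_sum_swapGain_of_mem_inter δ hF_fix hF_maps p hp (hnnO p).1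
  · intro e he
    obtain ⟨j, hj, rfl⟩ := mem_image.1 he
    exact swapDist_le_of_mem_inter δ hF_fix hF_maps p hj hp
  · rw [sum_image_graph]
    exact sub_five_mul_le_sum_swapGain hmetric hnnS hF_fix hF_avoid hF_fiber hp hp'

/-- Given a cost-minimizing center set `O` and an arbitrary center set `S`
(both of size `k`, with unique nearest assignments recorded by `nnO`, `nnS`), there is a set
`𝒮 ⊆ S × O` of `k` candidate 1-swaps, using every center of `O` exactly once and every
center of `S` at most twice, such that:
(a) for `p` with `nn(p) ∈ S ∩ O` (i.e. `p ∈ X10 ∪ X11`),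
    `Σ_{(i,j)∈𝒮} (δ(p) − δ′_{(i,j)}(p)) ≥ δ(p) − δ*(p)`;
(b) for `p ∈ X01` and every `(i,j) ∈ 𝒮`, `δ′_{(i,j)}(p) ≤ δ*(p)`;
(c) for `p ∈ X00`, `Σ_{(i,j)∈𝒮} (δ(p) − δ′_{(i,j)}(p)) ≥ δ(p) − 5·δ*(p)`. -/
theorem candidate_swaps_exist {X : Type*} [Fintype X] [DecidableEq X]
    (δ : X → X → ℝ) (hmetric : IsMetric δ) (k : ℕ)
    (S O : Finset X) (hScard : S.card = k) (hOcard : O.card = k)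
    (hUS : UniqueNearest δ S) (hUO : UniqueNearest δ O)
    (hOopt : ∀ T : Finset X, T.card = k → kmedCost δ O ≤ kmedCost δ T)
    (nnS nnO : X → X)
    (hnnS : ∀ p, nnS p ∈ S ∧ ∀ c ∈ S, δ p (nnS p) ≤ δ p c)
    (hnnO : ∀ p, nnO p ∈ O ∧ ∀ c ∈ O, δ p (nnO p) ≤ δ p c) :
    ∃ 𝒮 : Finset (X × X), 𝒮 ⊆ S ×ˢ O ∧ 𝒮.card = k ∧
      (∀ j ∈ O, (𝒮.filter (fun e => e.2 = j)).card = 1) ∧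
      (∀ i ∈ S, (𝒮.filter (fun e => e.1 = i)).card ≤ 2) ∧
      (∀ p : X, nnS p ∈ S ∩ O →
        δ p (nnS p) - δ p (nnO p) ≤
          ∑ e ∈ 𝒮, (δ p (nnS p) - swapDist δ S e.1 e.2 p)) ∧
      (∀ p : X, nnS p ∈ S \ O → nnO p ∈ S ∩ O →
        ∀ e ∈ 𝒮, swapDist δ S e.1 e.2 p ≤ δ p (nnO p)) ∧
      (∀ p : X, nnS p ∈ S \ O → nnO p ∈ O \ S →
        δ p (nnS p) - 5 * δ p (nnO p) ≤
          ∑ e ∈ 𝒮, (δ p (nnS p) - swapDist δ S e.1 e.2 p)) :=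
  candidate_swaps_exist_general δ hmetric k S O hScard hOcard nnS nnO hnnS hnnO
end
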